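/- arXiv:1511.03298 — 2 statements merged into one kernel-verified Lean document; each statement's English description precedes it below -/
import Mathlib

section
/- Let d ≥ 2 and let P = S_{n,d} ∩ ℤ^d be the set of integer points on the truncated paraboloid. Then the additive energy satisfies E(P) = Ω(n^{3 − 2/(d−1)}): there exists a constant c_d > 0 such that for all sufficiently large n, E(P) ≥ c_d · n^{3 − 2/(d−1)}. -/
open Finset
open scoped Pointwise


noncomputable def Bval (e n : ℕ) : ℝ := (n:ℝ) ^ ((1:ℝ)/((e:ℝ)+1))

noncomputable def Mint (e n : ℕ) : ℤ := ⌊Bval e n⌋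

noncomputable def Pfin (e : ℕ) (M : ℤ) : Finset (Fin (e+2) → ℤ) :=
  (Fintype.piFinset fun j : Fin (e+2) =>
      if (j:ℕ) < e+1 then Finset.Icc (-M) M else Finset.Icc 0 ((e+1) * M^2)).filter
    (fun a => a ⟨e+1, by omega⟩ = ∑ i : Fin (e+1), a (Fin.castLE (by omega) i) ^ 2)

lemma Bval_nonneg (e n : ℕ) : 0 ≤ Bval e n := Real.rpow_nonneg (Nat.cast_nonneg n) _

lemma Mint_nonneg (e n : ℕ) : 0 ≤ Mint e n := Int.floor_nonneg.2 (Bval_nonneg e n)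

lemma abs_le_iff_mem (e n : ℕ) (x : ℤ) :
    ((|x| : ℝ) ≤ Bval e n) ↔ x ∈ Finset.Icc (-(Mint e n)) (Mint e n) := by
  rw [Finset.mem_Icc, ← abs_le, Mint, Int.le_floor, Int.cast_abs]

lemma mem_Pfin_iff (e n : ℕ) (a : Fin (e+2) → ℤ) :
    a ∈ Pfin e (Mint e n) ↔
      (a ⟨e+1, by omega⟩ = ∑ i : Fin (e+1), a (Fin.castLE (by omega) i) ^ 2 ∧
        ∀ i : Fin (e+1), (|a (Fin.castLE (by omega) i)| : ℝ) ≤ Bval e n) := by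
  rw [Pfin, Finset.mem_filter, Fintype.mem_piFinset]
  constructor
  · rintro ⟨hbox, heq⟩
    refine ⟨heq, fun i => ?_⟩
    have h := hbox (Fin.castLE (by omega) i)
    rw [if_pos (by simpa using i.isLt)] at h
    exact (abs_le_iff_mem e n _).2 h
  · rintro ⟨heq, hb⟩
    refine ⟨fun j => ?_, heq⟩
    by_cases hj : (j:ℕ) < e+1
    · rw [if_pos hj]
      have := hb ⟨j, hj⟩
      rwa [abs_le_iff_mem e n, show Fin.castLE (by omega : e+1 ≤ e+2) ⟨(j:ℕ), hj⟩ = j from Fin.ext rfl] at this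
    · rw [if_neg hj]
      have hjv : j = ⟨e+1, by omega⟩ := Fin.ext (show (j:ℕ) = e+1 by omega)
      have haj : a j = ∑ i : Fin (e+1), a (Fin.castLE (by omega) i) ^ 2 := by
        rw [hjv]; exact heq
      rw [haj, Finset.mem_Icc]
      constructor
      · positivity
      · calc ∑ i : Fin (e+1), a (Fin.castLE (by omega) i) ^ 2
            ≤ ∑ _i : Fin (e+1), (Mint e n)^2 := by
              refine Finset.sum_le_sum fun i _ => ?_
              have := (abs_le_iff_mem e n _).1 (hb i)
              rw [Finset.mem_Icc] at this
              exact sq_le_sq' this.1 this.2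
          _ = (e+1) * (Mint e n)^2 := by
              rw [Finset.sum_const, Finset.card_univ, Fintype.card_fin, nsmul_eq_mul]
              push_cast; ring

def extF (e : ℕ) (a : Fin (e+1) → ℤ) : Fin (e+2) → ℤ :=
  fun j => if h : (j:ℕ) < e+1 then a ⟨j, h⟩ else ∑ i : Fin (e+1), a i ^ 2

lemma extF_castLE (e : ℕ) (a : Fin (e+1) → ℤ) (i : Fin (e+1)) :
    extF e a (Fin.castLE (by omega) i) = a i := by
  rw [extF, dif_pos (show ((Fin.castLE (by omega) i : Fin (e+2)):ℕ) < e+1 from i.isLt)]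
  exact congrArg a (Fin.ext rfl)

lemma extF_last (e : ℕ) (a : Fin (e+1) → ℤ) :
    extF e a ⟨e+1, by omega⟩ = ∑ i : Fin (e+1), a i ^ 2 := by
  rw [extF, dif_neg (Nat.lt_irrefl _)]

lemma card_Pfin_lower (e : ℕ) (M : ℤ) (hM : 0 ≤ M) :
    ((2*M+1).toNat)^(e+1) ≤ (Pfin e M).card := by
  have hcard : ((2*M+1).toNat)^(e+1)
      = (Fintype.piFinset fun _ : Fin (e+1) => Finset.Icc (-M) M).card := by
    rw [Fintype.card_piFinset]
    simp [Int.card_Icc]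
    congr 1
    omega
  rw [hcard]
  apply Finset.card_le_card_of_injOn (extF e)
  · intro a ha
    rw [Finset.mem_coe, Fintype.mem_piFinset] at ha
    rw [Finset.mem_coe, Pfin, Finset.mem_filter, Fintype.mem_piFinset]
    constructor
    · intro j
      by_cases hj : (j:ℕ) < e+1
      · rw [if_pos hj, extF, dif_pos hj]
        exact ha _
      · rw [if_neg hj, extF, dif_neg hj, Finset.mem_Icc]
        refine ⟨Finset.sum_nonneg fun i _ => sq_nonneg _, ?_⟩
        calc ∑ i : Fin (e+1), a i ^ 2 ≤ ∑ _i : Fin (e+1), M^2 := by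
              refine Finset.sum_le_sum fun i _ => ?_
              have := ha i
              rw [Finset.mem_Icc] at this
              exact sq_le_sq' this.1 this.2
          _ = (e+1) * M^2 := by
              rw [Finset.sum_const, Finset.card_univ, Fintype.card_fin, nsmul_eq_mul]
              push_cast; ring
    · rw [extF_last]
      exact Finset.sum_congr rfl fun i _ => by rw [extF_castLE]
  · intro a _ b _ h
    funext i
    have := congrFun h (Fin.castLE (by omega) i)
    rwa [extF_castLE, extF_castLE] at this

lemma prod_ite_card (e : ℕ) (c1 c2 : ℕ) :
    (∏ j : Fin (e+2), if (j:ℕ) < e+1 then c1 else c2) = c1^(e+1) * c2 := by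
  rw [Fin.prod_univ_castSucc]
  congr 1
  · rw [Finset.prod_congr rfl (fun i _ => if_pos (show ((Fin.castSucc i : Fin (e+2)):ℕ) < e+1 from i.isLt))]
    simp
  · exact if_neg (Nat.lt_irrefl _)

lemma card_add_upper (e : ℕ) (M : ℤ) :
    (Pfin e M + Pfin e M).card ≤ ((4*M+1).toNat)^(e+1) * ((2*((e+1)*M^2)+1).toNat) := by
  have hsub : Pfin e M + Pfin e M ⊆
      Fintype.piFinset fun j : Fin (e+2) =>
        if (j:ℕ) < e+1 then Finset.Icc (-(2*M)) (2*M) else Finset.Icc 0 (2*((e+1)*M^2)) := by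
    intro x hx
    rw [Finset.mem_add] at hx
    obtain ⟨a, ha, b, hb, rfl⟩ := hx
    have ha' := (Fintype.mem_piFinset.1 ((Finset.mem_filter.1 ha).1))
    have hb' := (Fintype.mem_piFinset.1 ((Finset.mem_filter.1 hb).1))
    rw [Fintype.mem_piFinset]
    intro j
    have h1 := ha' j
    have h2 := hb' j
    by_cases hj : (j:ℕ) < e+1
    · rw [if_pos hj] at h1 h2 ⊢
      rw [Finset.mem_Icc] at h1 h2 ⊢
      constructor <;> simp only [Pi.add_apply] <;> linarith
    · rw [if_neg hj] at h1 h2 ⊢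
      rw [Finset.mem_Icc] at h1 h2 ⊢
      constructor <;> simp only [Pi.add_apply] <;> linarith
  calc (Pfin e M + Pfin e M).card ≤ _ := Finset.card_le_card hsub
    _ = _ := by
        rw [Fintype.card_piFinset]
        rw [show (fun j : Fin (e+2) => (if (j:ℕ) < e+1 then Finset.Icc (-(2*M)) (2*M) else Finset.Icc 0 (2*((e+1)*M^2))).card)
            = fun j : Fin (e+2) => if (j:ℕ) < e+1 then (4*M+1).toNat else (2*((e+1)*M^2)+1).toNat from funext fun j => by
          split <;> · rw [Int.card_Icc]; congr 1; ring]
        exact prod_ite_card e _ _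

lemma energy_eq (e : ℕ) (M : ℤ) :
    (((Pfin e M ×ˢ Pfin e M) ×ˢ (Pfin e M ×ˢ Pfin e M)).filter
      fun q => q.1.1 + q.1.2 = q.2.1 + q.2.2).card = Finset.addEnergy (Pfin e M) (Pfin e M) := by
  rw [Finset.addEnergy_eq_card_filter]

lemma toNat_cast_real (x : ℤ) (hx : 0 ≤ x) : ((x.toNat : ℕ) : ℝ) = (x : ℝ) := by
  rw [← Int.cast_natCast, Int.toNat_of_nonneg hx]

lemma main (e n : ℕ) (hn : 2^(e+1) ≤ n) :
    ((3 * (e+1) * 5^(e+1) * 2^(3*e+1) : ℝ))⁻¹ * (n:ℝ) ^ ((3:ℝ) - 2/((e:ℝ)+1)) ≤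
      (((((Pfin e (Mint e n) ×ˢ Pfin e (Mint e n)) ×ˢ (Pfin e (Mint e n) ×ˢ Pfin e (Mint e n))).filter
        fun q => q.1.1 + q.1.2 = q.2.1 + q.2.2).card : ℕ) : ℝ) := by
  set B := Bval e n with hBdef
  have hB0 : 0 ≤ B := Bval_nonneg e n
  have hB2 : (2:ℝ) ≤ B := by
    rw [hBdef, Bval]
    have h2 : ((2:ℝ))^(((e:ℝ)+1)) ≤ (n:ℝ) := by
      calc ((2:ℝ))^((e:ℝ)+1) = ((2^(e+1):ℕ):ℝ) := by
            push_cast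
            rw [← Real.rpow_natCast 2 (e+1)]
            push_cast
            ring_nf
        _ ≤ (n:ℝ) := by exact_mod_cast hn
    calc (2:ℝ) = ((2:ℝ)^((e:ℝ)+1))^((1:ℝ)/((e:ℝ)+1)) := by
          rw [← Real.rpow_mul (by norm_num), mul_one_div, div_self (by positivity), Real.rpow_one]
      _ ≤ (n:ℝ)^((1:ℝ)/((e:ℝ)+1)) := Real.rpow_le_rpow (by positivity) h2 (by positivity)
  set M := Mint e n with hMdef
  have hM0 : 0 ≤ M := Mint_nonneg e n
  set m := ((M:ℤ):ℝ) with hmdef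
  have hmB : m ≤ B := Int.floor_le _
  have hBm : B - 1 ≤ m := le_of_lt (Int.sub_one_lt_floor B)
  have hm1 : 1 ≤ m := by linarith
  have hm0 : 0 < m := by linarith
  have hB2m : B ≤ 2*m := by linarith
  rw [energy_eq e M]
  have hE0 : (0:ℝ) ≤ ((Finset.addEnergy (Pfin e M) (Pfin e M) : ℕ) : ℝ) := Nat.cast_nonneg _
  have hp0 : (0:ℝ) ≤ (((Pfin e M).card : ℕ) : ℝ) := Nat.cast_nonneg _
  have hp : m^(e+1) ≤ (((Pfin e M).card : ℕ) : ℝ) := by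
    have h := card_Pfin_lower e M hM0
    have hcast : (((2*M+1).toNat : ℕ) : ℝ) = 2*m+1 := by
      rw [toNat_cast_real _ (by omega)]; push_cast; ring
    calc m^(e+1) ≤ (2*m+1)^(e+1) := by
          apply pow_le_pow_left₀ (le_of_lt hm0); linarith
      _ = (((2*M+1).toNat : ℕ) : ℝ)^(e+1) := by rw [hcast]
      _ ≤ (((Pfin e M).card : ℕ) : ℝ) := by exact_mod_cast h
  have hs : (((Pfin e M + Pfin e M).card : ℕ) : ℝ) ≤ 5^(e+1)*m^(e+1) * (3*((e:ℝ)+1)*m^2) := by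
    have h := card_add_upper e M
    have hc1 : (((4*M+1).toNat : ℕ) : ℝ) = 4*m+1 := by
      rw [toNat_cast_real _ (by omega)]; push_cast; ring
    have hc2 : (((2*((e+1)*M^2)+1).toNat : ℕ) : ℝ) = 2*(((e:ℝ)+1)*m^2)+1 := by
      rw [toNat_cast_real _ (by positivity)]; push_cast; ring
    have hem : (1:ℝ) ≤ ((e:ℝ)+1)*m^2 := by
      have h1 : (1:ℝ) ≤ (e:ℝ)+1 := by have := (Nat.cast_nonneg e : (0:ℝ) ≤ e); linarith
      nlinarith
    calc (((Pfin e M + Pfin e M).card : ℕ) : ℝ)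
        ≤ (((4*M+1).toNat : ℕ) : ℝ)^(e+1) * (((2*((e+1)*M^2)+1).toNat : ℕ) : ℝ) := by
          exact_mod_cast h
      _ = (4*m+1)^(e+1) * (2*(((e:ℝ)+1)*m^2)+1) := by rw [hc1, hc2]
      _ ≤ (5*m)^(e+1) * (3*(((e:ℝ)+1)*m^2)) := by
          apply mul_le_mul
          · apply pow_le_pow_left₀ (by linarith); linarith
          · nlinarith
          · positivity
          · positivity
      _ = 5^(e+1)*m^(e+1) * (3*((e:ℝ)+1)*m^2) := by rw [mul_pow]; ring
  have h1 : (((Pfin e M).card : ℕ) : ℝ)^2 * (((Pfin e M).card : ℕ) : ℝ)^2 ≤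
      (((Pfin e M + Pfin e M).card : ℕ) : ℝ) * ((Finset.addEnergy (Pfin e M) (Pfin e M) : ℕ) : ℝ) := by
    exact_mod_cast Finset.le_card_add_mul_addEnergy (Pfin e M) (Pfin e M)
  have key : m^(3*e+1) * m^(e+3) ≤
      ((3*((e:ℝ)+1)*5^(e+1)) * ((Finset.addEnergy (Pfin e M) (Pfin e M) : ℕ) : ℝ)) * m^(e+3) := by
    have e1 : m^(3*e+1) * m^(e+3) = (m^(e+1))^2 * (m^(e+1))^2 := by
      rw [← pow_mul, ← pow_add, ← pow_add]
      congr 1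
      ring
    calc m^(3*e+1) * m^(e+3) = (m^(e+1))^2 * (m^(e+1))^2 := e1
      _ ≤ (((Pfin e M).card : ℕ) : ℝ)^2 * (((Pfin e M).card : ℕ) : ℝ)^2 := by
          apply mul_le_mul <;> first
            | exact pow_le_pow_left₀ (by positivity) hp 2
            | positivity
      _ ≤ (((Pfin e M + Pfin e M).card : ℕ) : ℝ) * ((Finset.addEnergy (Pfin e M) (Pfin e M) : ℕ) : ℝ) := h1
      _ ≤ (5^(e+1)*m^(e+1) * (3*((e:ℝ)+1)*m^2)) * ((Finset.addEnergy (Pfin e M) (Pfin e M) : ℕ) : ℝ) :=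
          mul_le_mul_of_nonneg_right hs hE0
      _ = ((3*((e:ℝ)+1)*5^(e+1)) * ((Finset.addEnergy (Pfin e M) (Pfin e M) : ℕ) : ℝ)) * m^(e+3) := by
          ring
  have hE : m^(3*e+1) ≤ (3*((e:ℝ)+1)*5^(e+1)) * ((Finset.addEnergy (Pfin e M) (Pfin e M) : ℕ) : ℝ) :=
    le_of_mul_le_mul_right key (pow_pos hm0 (e+3))
  have hX : (n:ℝ)^((3:ℝ)-2/((e:ℝ)+1)) = B^(3*e+1) := by
    rw [hBdef, Bval, ← Real.rpow_natCast ((n:ℝ) ^ ((1:ℝ)/((e:ℝ)+1))) (3*e+1),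
      ← Real.rpow_mul (Nat.cast_nonneg n)]
    congr 1
    have he0 : ((e:ℝ)+1) ≠ 0 := by positivity
    field_simp
    push_cast
    ring
  rw [hX, inv_mul_le_iff₀ (by positivity)]
  have hfin : B^(3*e+1) ≤ 2^(3*e+1) * ((3*((e:ℝ)+1)*5^(e+1)) * ((Finset.addEnergy (Pfin e M) (Pfin e M) : ℕ) : ℝ)) := by
    calc B^(3*e+1) ≤ (2*m)^(3*e+1) := pow_le_pow_left₀ hB0 hB2m _
      _ = 2^(3*e+1) * m^(3*e+1) := mul_pow 2 m (3*e+1)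
      _ ≤ 2^(3*e+1) * ((3*((e:ℝ)+1)*5^(e+1)) * ((Finset.addEnergy (Pfin e M) (Pfin e M) : ℕ) : ℝ)) :=
          mul_le_mul_of_nonneg_left hE (by positivity)
  linarith [hfin]


theorem stmt3 (d : ℕ) (hd : 2 ≤ d) :
    ∃ c : ℝ, 0 < c ∧ ∃ N : ℕ, ∀ n : ℕ, N ≤ n →
      c * (n : ℝ) ^ ((3 : ℝ) - 2 / (d - 1)) ≤
        ({q : ((Fin d → ℤ) × (Fin d → ℤ)) × ((Fin d → ℤ) × (Fin d → ℤ)) |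
          (∀ a ∈ [q.1.1, q.1.2, q.2.1, q.2.2],
            a ⟨d - 1, by omega⟩ = ∑ i : Fin (d - 1), (a (Fin.castLE (by omega) i)) ^ 2 ∧
            ∀ i : Fin (d - 1), (|a (Fin.castLE (by omega) i)| : ℝ) ≤ (n : ℝ) ^ ((1 : ℝ) / (d - 1))) ∧
          q.1.1 + q.1.2 = q.2.1 + q.2.2}.ncard : ℝ) := by
  obtain ⟨e, rfl⟩ : ∃ e, d = e + 2 := ⟨d - 2, by omega⟩
  refine ⟨((3 * (e+1) * 5^(e+1) * 2^(3*e+1) : ℝ))⁻¹, by positivity, 2^(e+1), fun n hn => ?_⟩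
  have hc : ((e+2 : ℕ) : ℝ) - 1 = (e:ℝ)+1 := by push_cast; ring
  rw [hc]
  have hset : {q : ((Fin (e+2) → ℤ) × (Fin (e+2) → ℤ)) × ((Fin (e+2) → ℤ) × (Fin (e+2) → ℤ)) |
          (∀ a ∈ [q.1.1, q.1.2, q.2.1, q.2.2],
            a ⟨e+2 - 1, by omega⟩ = ∑ i : Fin (e+2 - 1), (a (Fin.castLE (by omega) i)) ^ 2 ∧
            ∀ i : Fin (e+2 - 1), (|a (Fin.castLE (by omega) i)| : ℝ) ≤ (n : ℝ) ^ ((1 : ℝ) / ((e:ℝ)+1))) ∧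
          q.1.1 + q.1.2 = q.2.1 + q.2.2}
      = ↑(((Pfin e (Mint e n) ×ˢ Pfin e (Mint e n)) ×ˢ (Pfin e (Mint e n) ×ˢ Pfin e (Mint e n))).filter
        fun q => q.1.1 + q.1.2 = q.2.1 + q.2.2) := by
    ext q
    simp only [Set.mem_setOf_eq, Finset.coe_filter, Finset.mem_product]
    constructor
    · rintro ⟨hall, heq⟩
      refine ⟨⟨⟨?_, ?_⟩, ?_, ?_⟩, heq⟩ <;>
        exact (mem_Pfin_iff e n _).2 (hall _ (by simp))
    · rintro ⟨⟨⟨h1, h2⟩, h3, h4⟩, heq⟩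
      refine ⟨?_, heq⟩
      intro a ha
      simp only [List.mem_cons, List.not_mem_nil, or_false] at ha
      rcases ha with rfl|rfl|rfl|rfl
      · exact (mem_Pfin_iff e n _).1 h1
      · exact (mem_Pfin_iff e n _).1 h2
      · exact (mem_Pfin_iff e n _).1 h3
      · exact (mem_Pfin_iff e n _).1 h4
  rw [hset, Set.ncard_coe_finset]
  exact main e n hn
end

section
/- The number of divisors function satisfies d(n) = n^{O(1/log log n)}: there is an absolute constant C such that for all n ≥ 3, d(n) ≤ n^{C/ log log n}. -/
open Real Finset

set_option maxHeartbeats 1000000 in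
theorem stmt8 :
    ∃ C : ℝ, ∀ n : ℕ, 3 ≤ n →
      (n.divisors.card : ℝ) ≤ (n : ℝ) ^ (C / Real.log (Real.log n)) := by
  use 162
  intro n hn
  have hn0 : n ≠ 0 := by omega
  set L : ℝ := Real.log n with hLdef
  set LL : ℝ := Real.log L with hLLdef
  have hnR : (3:ℝ) ≤ (n:ℝ) := by exact_mod_cast hn
  have hn1 : (1:ℝ) < (n:ℝ) := by linarith
  have hL1 : 1 < L := by
    rw [hLdef]
    have h3 : Real.exp 1 < 3 := by
      have := Real.exp_one_lt_d9; linarith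
    calc (1:ℝ) = Real.log (Real.exp 1) := (Real.log_exp 1).symm
    _ < Real.log 3 := Real.log_lt_log (Real.exp_pos 1) h3
    _ ≤ Real.log n := Real.log_le_log (by norm_num) hnR
  have hL0 : (0:ℝ) < L := by linarith
  have hLL0 : (0:ℝ) < LL := Real.log_pos hL1
  set ε : ℝ := 2 / LL with hεdef
  have hε0 : (0:ℝ) < ε := by positivity
  set B : ℝ := L ^ ((2:ℝ)⁻¹) with hBdef
  have hB1 : (1:ℝ) ≤ B := Real.one_le_rpow hL1.le (by norm_num)
  -- each exponent is small: a + 1 ≤ 3 L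
  have hexp : ∀ p ∈ n.primeFactors, ((n.factorization p : ℝ) + 1) ≤ 3 * L := by
    intro p hp
    have hpp : p.Prime := Nat.prime_of_mem_primeFactors hp
    have h2n : (2:ℕ) ^ n.factorization p ≤ n :=
      le_trans (Nat.pow_le_pow_left hpp.two_le _) (Nat.ordProj_le p hn0)
    have h2nR : ((2:ℝ)) ^ n.factorization p ≤ (n:ℝ) := by exact_mod_cast h2n
    have hlog : (n.factorization p : ℝ) * Real.log 2 ≤ L := by
      rw [hLdef, ← Real.log_pow]
      exact Real.log_le_log (by positivity) h2nR
    have hlog2 : (0.6931471803:ℝ) < Real.log 2 := Real.log_two_gt_d9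
    nlinarith [ (n.factorization p).cast_nonneg (α := ℝ) ]
  -- split
  have hcard : (n.divisors.card : ℝ) =
      ∏ p ∈ n.primeFactors, ((n.factorization p : ℝ) + 1) := by
    rw [Nat.card_divisors hn0]
    push_cast
    rfl
  set S := n.primeFactors with hS
  set small := S.filter (fun p : ℕ => (p:ℝ) < B) with hsmalldef
  set large := S.filter (fun p : ℕ => ¬ ((p:ℝ) < B)) with hlargedef
  have hsplit : (n.divisors.card : ℝ) =
      (∏ p ∈ small, ((n.factorization p : ℝ) + 1)) *
      (∏ p ∈ large, ((n.factorization p : ℝ) + 1)) := by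
    rw [hcard, hsmalldef, hlargedef,
      Finset.prod_filter_mul_prod_filter_not S _ _]
  -- small part
  have hsmallcard : ((small.card : ℝ)) ≤ 2 * B := by
    have hsub : small ⊆ Finset.range ⌈B⌉₊ := by
      intro p hp
      rw [hsmalldef, Finset.mem_filter] at hp
      exact Finset.mem_range.2 (Nat.lt_ceil.2 hp.2)
    have := Finset.card_le_card hsub
    rw [Finset.card_range] at this
    have h2 : (small.card : ℝ) ≤ (⌈B⌉₊ : ℝ) := by exact_mod_cast this
    have h3 : (⌈B⌉₊ : ℝ) < B + 1 := Nat.ceil_lt_add_one (by linarith)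
    linarith
  have hsmall : (∏ p ∈ small, ((n.factorization p : ℝ) + 1)) ≤
      (3 * L) ^ ((2:ℝ) * B) := by
    have h1 : (∏ p ∈ small, ((n.factorization p : ℝ) + 1)) ≤ (3*L) ^ small.card := by
      have := Finset.prod_le_prod (s := small)
        (f := fun p => (n.factorization p : ℝ) + 1) (g := fun _ => 3*L)
        (fun p _ => by positivity)
        (fun p hp => hexp p (Finset.mem_of_mem_filter p hp))
      rwa [Finset.prod_const] at this
    calc (∏ p ∈ small, ((n.factorization p : ℝ) + 1)) ≤ (3*L) ^ small.card := h1
      _ = (3*L) ^ ((small.card : ℝ)) := (Real.rpow_natCast _ _).symm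
      _ ≤ (3*L) ^ ((2:ℝ) * B) :=
        Real.rpow_le_rpow_of_exponent_le (by linarith) hsmallcard
  -- large part
  have hlarge : (∏ p ∈ large, ((n.factorization p : ℝ) + 1)) ≤ (n:ℝ) ^ ε := by
    have hterm : ∀ p ∈ large, ((n.factorization p : ℝ) + 1) ≤ ((p:ℝ) ^ n.factorization p) ^ ε := by
      intro p hp
      rw [hlargedef, Finset.mem_filter] at hp
      obtain ⟨hpS, hpB⟩ := hp
      have hpp : p.Prime := Nat.prime_of_mem_primeFactors hpS
      have hp0 : (0:ℝ) < p := by exact_mod_cast hpp.pos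
      have hBp : B ≤ (p:ℝ) := not_lt.1 hpB
      have hlogp : LL / 2 ≤ Real.log p := by
        have : Real.log B ≤ Real.log p := Real.log_le_log (by linarith) hBp
        rw [hBdef, Real.log_rpow hL0] at this
        rw [hLLdef]; linarith
      set a := n.factorization p with ha
      have key : (a : ℝ) ≤ ε * ((a:ℝ) * Real.log p) := by
        rw [hεdef, div_mul_eq_mul_div, le_div_iff₀ hLL0]
        nlinarith [a.cast_nonneg (α := ℝ)]
      calc ((a:ℝ) + 1) ≤ Real.exp a := Real.add_one_le_exp _
        _ ≤ Real.exp (ε * ((a:ℝ) * Real.log p)) := Real.exp_le_exp.2 key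
        _ = ((p:ℝ) ^ a) ^ ε := by
            rw [Real.rpow_def_of_pos (by positivity), Real.log_pow]
            ring_nf
    have hfullN : (∏ p ∈ S, p ^ n.factorization p) = n := by
      conv_rhs => rw [← Nat.factorization_prod_pow_eq_self hn0]
      rfl
    have hprodle : (∏ p ∈ large, (p:ℝ) ^ n.factorization p) ≤ (n:ℝ) := by
      have hsub : large ⊆ S := Finset.filter_subset _ _
      have hN : (∏ p ∈ large, p ^ n.factorization p) ≤ n := by
        calc (∏ p ∈ large, p ^ n.factorization p)
            ≤ ∏ p ∈ S, p ^ n.factorization p :=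
              Finset.prod_le_prod_of_subset_of_one_le' hsub
                (fun p hp _ => Nat.one_le_pow _ _ (Nat.prime_of_mem_primeFactors hp).pos)
          _ = n := hfullN
      rw [show (∏ p ∈ large, (p:ℝ) ^ n.factorization p)
        = ((∏ p ∈ large, p ^ n.factorization p : ℕ) : ℝ) by push_cast; rfl]
      exact_mod_cast hN
    calc (∏ p ∈ large, ((n.factorization p : ℝ) + 1))
        ≤ ∏ p ∈ large, ((p:ℝ) ^ n.factorization p) ^ ε :=
          Finset.prod_le_prod (fun p _ => by positivity) hterm
      _ = (∏ p ∈ large, (p:ℝ) ^ n.factorization p) ^ ε :=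
          Real.finset_prod_rpow _ _ (fun p _ => by positivity) _
      _ ≤ (n:ℝ) ^ ε :=
          Real.rpow_le_rpow (Finset.prod_nonneg (fun p _ => by positivity)) hprodle hε0.le
  -- final comparison
  have hfinal : (3 * L) ^ ((2:ℝ) * B) * (n:ℝ) ^ ε ≤ (n:ℝ) ^ ((162:ℝ) / LL) := by
    have e1 : (3 * L) ^ ((2:ℝ) * B) = Real.exp (Real.log (3*L) * (2*B)) := by
      rw [Real.rpow_def_of_pos (by linarith)]
    have e2 : (n:ℝ) ^ ε = Real.exp (L * ε) := by
      rw [Real.rpow_def_of_pos (by linarith), hLdef]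
    have e3 : (n:ℝ) ^ ((162:ℝ) / LL) = Real.exp (L * (162 / LL)) := by
      rw [Real.rpow_def_of_pos (by linarith), hLdef]
    rw [e1, e2, e3, ← Real.exp_add, Real.exp_le_exp]
    -- bounds via log x ≤ 8 x^(1/8)
    have h8 : (0:ℝ) < (8:ℝ)⁻¹ := by norm_num
    have hlogL : LL ≤ 8 * L ^ ((8:ℝ)⁻¹) := by
      have := Real.log_le_rpow_div hL0.le h8
      rw [hLLdef]
      calc Real.log L ≤ L ^ ((8:ℝ)⁻¹) / (8:ℝ)⁻¹ := this
        _ = 8 * L ^ ((8:ℝ)⁻¹) := by ring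
    have hL8one : (1:ℝ) ≤ L ^ ((8:ℝ)⁻¹) := Real.one_le_rpow hL1.le (by norm_num)
    have hlog3L : Real.log (3*L) ≤ 10 * L ^ ((8:ℝ)⁻¹) := by
      rw [Real.log_mul (by norm_num) (by linarith)]
      have hl3 : Real.log 3 ≤ 2 := by
        nlinarith [Real.log_le_sub_one_of_pos (show (0:ℝ) < 3 by norm_num)]
      have hlogL' : Real.log L ≤ 8 * L ^ ((8:ℝ)⁻¹) := by rw [← hLLdef]; exact hlogL
      nlinarith
    have hcomb : Real.log (3*L) * (2*B) * LL ≤ 160 * L := by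
      have hB0 : (0:ℝ) ≤ B := by linarith
      have hlog3L0 : (0:ℝ) ≤ Real.log (3*L) := by
        apply Real.log_nonneg; linarith
      have hstep : Real.log (3*L) * (2*B) * LL ≤
          (10 * L ^ ((8:ℝ)⁻¹)) * (2*B) * (8 * L ^ ((8:ℝ)⁻¹)) := by
        have h1 : Real.log (3*L) * (2*B) ≤ (10 * L ^ ((8:ℝ)⁻¹)) * (2*B) :=
          mul_le_mul_of_nonneg_right hlog3L (by linarith)
        have h2 : (0:ℝ) ≤ (10 * L ^ ((8:ℝ)⁻¹)) * (2*B) := by positivity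
        calc Real.log (3*L) * (2*B) * LL ≤ (10 * L ^ ((8:ℝ)⁻¹)) * (2*B) * LL :=
              mul_le_mul_of_nonneg_right h1 hLL0.le
          _ ≤ (10 * L ^ ((8:ℝ)⁻¹)) * (2*B) * (8 * L ^ ((8:ℝ)⁻¹)) :=
              mul_le_mul_of_nonneg_left hlogL h2
      have hrw : (10 * L ^ ((8:ℝ)⁻¹)) * (2*B) * (8 * L ^ ((8:ℝ)⁻¹)) =
          160 * L ^ ((8:ℝ)⁻¹ + (2:ℝ)⁻¹ + (8:ℝ)⁻¹) := by
        rw [hBdef, Real.rpow_add hL0, Real.rpow_add hL0]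
        ring
      have hle : L ^ ((8:ℝ)⁻¹ + (2:ℝ)⁻¹ + (8:ℝ)⁻¹) ≤ L := by
        calc L ^ ((8:ℝ)⁻¹ + (2:ℝ)⁻¹ + (8:ℝ)⁻¹) ≤ L ^ (1:ℝ) :=
          Real.rpow_le_rpow_of_exponent_le hL1.le (by norm_num)
        _ = L := Real.rpow_one L
      rw [hrw] at hstep
      linarith
    -- need: log(3L)*(2B) + L*ε ≤ L*(162/LL)
    rw [hεdef, ← sub_nonneg]
    have heq : L * (162 / LL) - (Real.log (3*L) * (2*B) + L * (2 / LL)) =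
        (160 * L - Real.log (3*L) * (2*B) * LL) / LL := by
      field_simp
      ring
    rw [heq]
    exact div_nonneg (by linarith) hLL0.le
  calc (n.divisors.card : ℝ)
      = (∏ p ∈ small, ((n.factorization p : ℝ) + 1)) *
        (∏ p ∈ large, ((n.factorization p : ℝ) + 1)) := hsplit
    _ ≤ (3 * L) ^ ((2:ℝ) * B) * (n:ℝ) ^ ε := by
        apply mul_le_mul hsmall hlarge (Finset.prod_nonneg (fun p _ => by positivity)) (by positivity)
    _ ≤ (n:ℝ) ^ ((162:ℝ) / LL) := hfinal
end
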